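/- Let φ = Π.ψ be a PCNF and A a partial assignment such that the propositional CNF ψ[A] is unsatisfiable. Then the PCNFs Π.ψ and Π.(ψ ∧ (⋁_{l∈A} l̄)) are satisfiability-equivalent. -/
import Mathlib


/-- Variables are natural numbers. -/
abbrev Var := ℕ

/-- A literal is a variable together with a polarity. -/
abbrev Lit := Var × Bool

/-- Negation of a literal. -/
def Lit.negate (l : Lit) : Lit := (l.1, !l.2)

/-- A clause is a finite set of literals (interpreted disjunctively). -/
abbrev Clause := Finset Lit

/-- A cube is a finite set of literals (interpreted conjunctively). -/
abbrev Cube := Finset Lit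

/-- A CNF is a finite set of clauses. -/
abbrev Cnf := Finset Clause

/-- An assignment is a finite set of literals. -/
abbrev Assignment := Finset Lit

/-- An assignment contains no complementary pair of literals. -/
def Assignment.consistent (A : Assignment) : Prop := ∀ l ∈ A, Lit.negate l ∉ A

/-- A total assignment satisfies a literal. -/
def litSat (σ : Var → Bool) (l : Lit) : Prop := σ l.1 = l.2

/-- A total assignment satisfies a clause. -/
def clauseSat (σ : Var → Bool) (C : Clause) : Prop := ∃ l ∈ C, litSat σ l

/-- A total assignment satisfies a CNF (is a propositional model). -/
def cnfSat (σ : Var → Bool) (ψ : Cnf) : Prop := ∀ C ∈ ψ, clauseSat σ C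

/-- A total assignment satisfies a cube. -/
def cubeSat (σ : Var → Bool) (D : Cube) : Prop := ∀ l ∈ D, litSat σ l

/-- Restriction of a clause by an assignment: delete falsified literals. -/
def Clause.restrict (C : Clause) (A : Assignment) : Clause :=
  C.filter (fun l => Lit.negate l ∉ A)

/-- Restriction ψ[A] of a CNF by an assignment: remove satisfied clauses and
delete falsified literals from the remaining clauses. -/
def Cnf.restrict (ψ : Cnf) (A : Assignment) : Cnf :=
  (ψ.filter (fun C => ∀ l ∈ A, l ∉ C)).image (fun C => Clause.restrict C A)

/-- Quantifiers. -/
inductive Quant | ex | all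
deriving DecidableEq

/-- A quantifier prefix: a list of quantified variables (outermost first). -/
abbrev QPrefix := List (Quant × Var)

/-- Restriction of a prefix by an assignment: remove assigned variables. -/
def QPrefix.restrict (pre : QPrefix) (A : Assignment) : QPrefix :=
  pre.filter (fun q => q.2 ∉ A.image Prod.fst)

/-- Satisfiability of the PCNF `pre.ψ`, defined recursively over the prefix:
an existential variable needs one satisfiable branch, a universal variable
both; a quantifier-free CNF is satisfiable iff it is propositionally true. -/
def qbfSat : QPrefix → Cnf → Prop
  | [], ψ => ∃ σ : Var → Bool, cnfSat σ ψ
  | (Quant.ex, x) :: pre, ψ =>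
      qbfSat pre (Cnf.restrict ψ {(x, true)}) ∨ qbfSat pre (Cnf.restrict ψ {(x, false)})
  | (Quant.all, x) :: pre, ψ =>
      qbfSat pre (Cnf.restrict ψ {(x, true)}) ∧ qbfSat pre (Cnf.restrict ψ {(x, false)})


lemma restrict_singleton_sat (σ : Var → Bool) (ψ : Cnf) (x : Var) (b : Bool) :
    cnfSat σ (Cnf.restrict ψ {(x, b)}) ↔ cnfSat (Function.update σ x b) ψ := by
  constructor
  · intro h C hC
    by_cases hx : (x, b) ∈ C
    · exact ⟨(x, b), hx, by simp [litSat]⟩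
    · have hCf : C ∈ ψ.filter (fun C => ∀ l ∈ ({(x, b)} : Assignment), l ∉ C) := by
        simp [Finset.mem_filter, hC, hx]
      obtain ⟨l, hl, hsat⟩ := h _ (Finset.mem_image_of_mem _ hCf)
      rw [Clause.restrict, Finset.mem_filter] at hl
      have hne : l.1 ≠ x := by
        intro hlx
        rcases Bool.eq_or_eq_not l.2 b with hb | hb
        · exact hx (by rw [← hlx, ← hb]; exact hl.1)
        · exact hl.2 (by simp [Lit.negate, hlx, hb])
      exact ⟨l, hl.1, by simpa [litSat, Function.update_of_ne hne] using hsat⟩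
  · intro h D hD
    rw [Cnf.restrict, Finset.mem_image] at hD
    obtain ⟨C, hCf, rfl⟩ := hD
    rw [Finset.mem_filter] at hCf
    obtain ⟨l, hl, hsat⟩ := h C hCf.1
    have hne : l.1 ≠ x := by
      intro hlx
      have : l.2 = b := by
        rw [litSat, hlx, Function.update_self] at hsat
        exact hsat.symm
      exact hCf.2 (x, b) (by simp) (by rw [← hlx, ← this]; exact hl)
    refine ⟨l, ?_, by simpa [litSat, Function.update_of_ne hne] using hsat⟩
    rw [Clause.restrict, Finset.mem_filter]
    refine ⟨hl, ?_⟩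
    simp [Lit.negate, hne]

lemma qbfSat_congr (pre : QPrefix) (ψ₁ ψ₂ : Cnf)
    (h : ∀ σ, cnfSat σ ψ₁ ↔ cnfSat σ ψ₂) :
    qbfSat pre ψ₁ ↔ qbfSat pre ψ₂ := by
  induction pre generalizing ψ₁ ψ₂ with
  | nil => simp only [qbfSat]; exact exists_congr h
  | cons q pre ih =>
    obtain ⟨q, x⟩ := q
    have key : ∀ b : Bool, qbfSat pre (Cnf.restrict ψ₁ {(x, b)}) ↔
        qbfSat pre (Cnf.restrict ψ₂ {(x, b)}) := fun b =>
      ih _ _ (fun σ => by rw [restrict_singleton_sat, restrict_singleton_sat, h])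
    cases q
    · simp only [qbfSat]; rw [key true, key false]
    · simp only [qbfSat]; rw [key true, key false]

/-- Abstraction-based conflict generation is sound: if the propositional CNF
`ψ[A]` is unsatisfiable, then the PCNFs `pre.ψ` and
`pre.(ψ ∧ (⋁_{l ∈ A} ¬l))` are satisfiability-equivalent. -/
theorem abstraction_based_conflict_generation
    (pre : QPrefix) (ψ : Cnf) (A : Assignment)
    (hA : Assignment.consistent A)
    (hunsat : ¬ ∃ σ : Var → Bool, cnfSat σ (Cnf.restrict ψ A)) :
    qbfSat pre ψ ↔ qbfSat pre (insert (A.image Lit.negate) ψ) := by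
  apply qbfSat_congr
  intro σ
  constructor
  · intro hψ C hC
    rcases Finset.mem_insert.mp hC with rfl | hC
    · -- σ must satisfy the new clause
      by_contra hcl
      apply hunsat
      refine ⟨σ, ?_⟩
      intro D hD
      rw [Cnf.restrict, Finset.mem_image] at hD
      obtain ⟨C, hCf, rfl⟩ := hD
      rw [Finset.mem_filter] at hCf
      obtain ⟨l, hl, hsat⟩ := hψ C hCf.1
      refine ⟨l, ?_, hsat⟩
      rw [Clause.restrict, Finset.mem_filter]
      refine ⟨hl, fun hneg => ?_⟩
      exact hcl ⟨l, by simpa [Lit.negate] using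
        Finset.mem_image_of_mem Lit.negate hneg, hsat⟩
    · exact hψ C hC
  · intro hψ C hC
    exact hψ C (Finset.mem_insert_of_mem hC)
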